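/- arXiv:2305.18467 — 3 statements merged into one kernel-verified Lean document; each statement's English description precedes it below -/
import Mathlib

section
/- Let A and B be self-adjoint operators on a Hilbert space with orthonormal eigenbases {u_i} (eigenvalues λ_i(A)) and {w_i} (eigenvalues λ_i(B)) respectively. Let Pr_{w_i} denote the orthogonal projection onto the span of w_i. Then for each i, the distance from u_i to its projection satisfies ‖u_i − Pr_{w_i} u_i‖ ≤ ‖B u_i − A u_i‖ / min_{j ≠ i} |λ_j(B) − λ_i(A)|, provided the minimum in the denominator is positive. -/
/-!
Expand both sides in the eigenbasis `w` of `B`. Since `B` is symmetric, the `j`-th coefficient of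
the residual `B u - A u` is `(λ_j(B) - λ_i(A)) ⟪u, w_j⟫`, while the `j`-th coefficient of
`u - Pr_{w_i} u` is `⟪u, w_j⟫` for `j ≠ i` and `0` for `j = i`. So the residual dominates `c` times
the projection error coefficientwise, and Parseval's identity turns this into the norm bound.
-/

open scoped RealInnerProductSpace

section

variable {ι E : Type*} [NormedAddCommGroup E] [InnerProductSpace ℝ E]

theorem HilbertBasis.hasSum_inner_sq (b : HilbertBasis ι ℝ E) (x : E) :
    HasSum (fun i => ⟪x, b i⟫ ^ 2) (‖x‖ ^ 2) := by
  simpa only [real_inner_comm x, ← sq, real_inner_self_eq_norm_sq] using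
    b.hasSum_inner_mul_inner x x

theorem HilbertBasis.mul_norm_le_norm_of_abs_inner_le (b : HilbertBasis ι ℝ E) {x y : E} {c : ℝ}
    (hc : 0 ≤ c) (h : ∀ i, c * |⟪x, b i⟫| ≤ |⟪y, b i⟫|) : c * ‖x‖ ≤ ‖y‖ := by
  have hsq : ∀ i, c ^ 2 * ⟪x, b i⟫ ^ 2 ≤ ⟪y, b i⟫ ^ 2 := fun i => by
    simpa only [mul_pow, sq_abs] using pow_le_pow_left₀ (by positivity) (h i) 2
  have : (c * ‖x‖) ^ 2 ≤ ‖y‖ ^ 2 := by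
    rw [mul_pow]
    exact hasSum_le hsq ((b.hasSum_inner_sq x).mul_left _) (b.hasSum_inner_sq y)
  exact (pow_le_pow_iff_left₀ (by positivity) (norm_nonneg y) two_ne_zero).mp this

theorem Orthonormal.inner_sub_inner_smul_self {v : ι → E} (hv : Orthonormal ℝ v) (x : E) (i : ι) :
    ⟪x - ⟪x, v i⟫ • v i, v i⟫ = 0 := by
  rw [inner_sub_left, real_inner_smul_left, real_inner_self_eq_norm_sq, hv.1 i]
  ring

theorem Orthonormal.inner_sub_inner_smul_of_ne {v : ι → E} (hv : Orthonormal ℝ v) (x : E)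
    {i j : ι} (hij : i ≠ j) : ⟪x - ⟪x, v i⟫ • v i, v j⟫ = ⟪x, v j⟫ := by
  rw [inner_sub_left, real_inner_smul_left, hv.inner_eq_zero hij, mul_zero, sub_zero]

theorem inner_sub_apply_eq_mul_inner_of_eigen {A B : E →ₗ[ℝ] E} (hB : B.IsSymmetric)
    {x y : E} {a b : ℝ} (hx : A x = a • x) (hy : B y = b • y) :
    ⟪B x - A x, y⟫ = (b - a) * ⟪x, y⟫ := by
  rw [inner_sub_left, hB x y, hx, hy, real_inner_smul_left, real_inner_smul_right]
  ring

end

theorem stmt_0_general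
    {H : Type*} [NormedAddCommGroup H] [InnerProductSpace ℝ H] [CompleteSpace H]
    (A B : H →L[ℝ] H) (hB : IsSelfAdjoint B)
    (u : ℕ → H) (w : HilbertBasis ℕ ℝ H)
    (lA lB : ℕ → ℝ)
    (hAu : ∀ i, A (u i) = lA i • u i)
    (hBw : ∀ j, B (w j) = lB j • w j)
    (i : ℕ) (c : ℝ) (hc : 0 < c)
    (hmin : ∀ j, j ≠ i → c ≤ |lB j - lA i|) :
    ‖u i - ⟪u i, w i⟫ • (w i : H)‖ ≤ ‖B (u i) - A (u i)‖ / c := by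
  have hres (j : ℕ) : ⟪B (u i) - A (u i), w j⟫ = (lB j - lA i) * ⟪u i, w j⟫ :=
    inner_sub_apply_eq_mul_inner_of_eigen (A := (A : H →ₗ[ℝ] H)) hB.isSymmetric (hAu i) (hBw j)
  rw [le_div_iff₀ hc, mul_comm]
  refine w.mul_norm_le_norm_of_abs_inner_le hc.le fun j => ?_
  rw [hres, abs_mul]
  rcases eq_or_ne i j with rfl | hij
  · rw [w.orthonormal.inner_sub_inner_smul_self, abs_zero, mul_zero]
    positivity
  · rw [w.orthonormal.inner_sub_inner_smul_of_ne _ hij]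
    gcongr
    exact hmin j hij.symm

/-- Davis–Kahan type bound: distance from eigenvector `u i` of `A` to its projection onto
the span of the eigenvector `w i` of `B` is controlled by `‖B (u i) - A (u i)‖` divided by
(a positive lower bound `c` for) the minimal gap `min_{j ≠ i} |λ_j(B) - λ_i(A)|`. -/
theorem stmt_0
    {H : Type*} [NormedAddCommGroup H] [InnerProductSpace ℝ H] [CompleteSpace H]
    (A B : H →L[ℝ] H) (hA : IsSelfAdjoint A) (hB : IsSelfAdjoint B)
    (u : ℕ → H) (w : HilbertBasis ℕ ℝ H)
    (lA lB : ℕ → ℝ)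
    (hu_norm : ∀ i, ‖u i‖ = 1)
    (hAu : ∀ i, A (u i) = lA i • u i)
    (hBw : ∀ j, B (w j) = lB j • w j)
    (i : ℕ) (c : ℝ) (hc : 0 < c)
    (hmin : ∀ j, j ≠ i → c ≤ |lB j - lA i|) :
    ‖u i - ⟪u i, w i⟫ • (w i : H)‖ ≤ ‖B (u i) - A (u i)‖ / c :=
  stmt_0_general A B hB u w lA lB hAu hBw i c hc hmin
end

section
/- Let A and B be self-adjoint operators on a Hilbert space with unit eigenvectors u_i (eigenvalue λ_i(A)) and w_i (eigenvalue λ_i(B)) respectively. If ⟨u_i, w_i⟩ ≠ 0, then |λ_i(A) − λ_i(B)| ≤ ‖(A − B) u_i‖ / |⟨u_i, w_i⟩|. -/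
open scoped RealInnerProductSpace

theorem LinearMap.IsSymmetric.inner_sub_apply_of_eigenvectors
    {E : Type*} [NormedAddCommGroup E] [InnerProductSpace ℝ E]
    {S T : E →ₗ[ℝ] E} (hT : T.IsSymmetric) {u w : E} {a b : ℝ}
    (hSu : S u = a • u) (hTw : T w = b • w) :
    ⟪w, (S - T) u⟫ = (a - b) * ⟪w, u⟫ := by
  rw [LinearMap.sub_apply, inner_sub_right, hSu, ← hT, hTw, real_inner_smul_right,
    real_inner_smul_left, sub_mul]

theorem stmt_1_general
    {H : Type*} [NormedAddCommGroup H] [InnerProductSpace ℝ H] [CompleteSpace H]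
    (A B : H →L[ℝ] H) (hB : IsSelfAdjoint B)
    (u w : H) (lA lB : ℝ)
    (hw : ‖w‖ = 1)
    (hAu : A u = lA • u) (hBw : B w = lB • w)
    (hne : ⟪u, w⟫ ≠ 0) :
    |lA - lB| ≤ ‖(A - B) u‖ / |⟪u, w⟫| := by
  have key : ⟪w, (A - B) u⟫ = (lA - lB) * ⟪u, w⟫ := by
    rw [real_inner_comm w u]
    exact hB.isSymmetric.inner_sub_apply_of_eigenvectors (S := (A : H →ₗ[ℝ] H)) hAu hBw
  rw [le_div_iff₀ (abs_pos.mpr hne), ← abs_mul, ← key]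
  calc |⟪w, (A - B) u⟫| ≤ ‖w‖ * ‖(A - B) u‖ := abs_real_inner_le_norm _ _
    _ = ‖(A - B) u‖ := by rw [hw, one_mul]

/-- Eigenvalue perturbation: if `u`, `w` are unit eigenvectors of the self-adjoint operators
`A`, `B` with eigenvalues `lA`, `lB` and `⟪u, w⟫ ≠ 0`, then
`|lA - lB| ≤ ‖(A - B) u‖ / |⟪u, w⟫|`. -/
theorem stmt_1
    {H : Type*} [NormedAddCommGroup H] [InnerProductSpace ℝ H] [CompleteSpace H]
    (A B : H →L[ℝ] H) (hA : IsSelfAdjoint A) (hB : IsSelfAdjoint B)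
    (u w : H) (lA lB : ℝ)
    (hu : ‖u‖ = 1) (hw : ‖w‖ = 1)
    (hAu : A u = lA • u) (hBw : B w = lB • w)
    (hne : ⟪u, w⟫ ≠ 0) :
    |lA - lB| ≤ ‖(A - B) u‖ / |⟪u, w⟫| :=
  stmt_1_general A B hB u w lA lB hw hAu hBw hne
end

section
/- Let Φ and Ψ be two L-layer neural networks with the same architecture: layer l maps F_{l−1} features to F_l features via x_l^p = σ(Σ_q h_l^{pq} x_{l−1}^q) and y_l^p = σ(Σ_q g_l^{pq} y_{l−1}^q), where all filters h_l^{pq}, g_l^{pq} are linear with operator norm at most 1, σ is nonexpansive with σ(0)=0, and the per-filter difference satisfies ‖h_l^{pq} z − g_l^{pq} z‖ ≤ Δ for every unit vector z used in the network (more precisely, ‖(h_l^{pq} − g_l^{pq}) y‖ ≤ Δ ‖y‖ for all y). If both networks receive the same input with F_0 = F_L = 1 and F_l = F for 1 ≤ l ≤ L−1, and the input x has ‖x‖ ≤ 1, then the output difference satisfies ‖Φ(x) − Ψ(x)‖ ≤ L F^{L−1} Δ. -/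
/-- Output difference of two L-layer networks with the same architecture and nonlinearity,
whose filters differ by at most `Δ` in operator norm, is at most `L * F^(L-1) * Δ` on inputs
of norm at most 1 (with `F 0 = F L = 1` and `F l = Fm` in hidden layers). -/
theorem stmt_6
    {H : Type*} [NormedAddCommGroup H] [NormedSpace ℝ H]
    (L Fm : ℕ) (hL : 1 ≤ L) (F : ℕ → ℕ)
    (hF0 : F 0 = 1) (hFL : F L = 1)
    (hFmid : ∀ l, 1 ≤ l → l ≤ L - 1 → F l = Fm)
    (x y : ℕ → ℕ → H)
    (hfil gfil : ℕ → ℕ → ℕ → H →L[ℝ] H)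
    (σ : H → H) (hσ : ∀ u v : H, ‖σ u - σ v‖ ≤ ‖u - v‖) (hσ0 : σ 0 = 0)
    (hnormh : ∀ l p q, ‖hfil l p q‖ ≤ 1)
    (hnormg : ∀ l p q, ‖gfil l p q‖ ≤ 1)
    (Δ : ℝ) (hΔ : 0 ≤ Δ)
    (hdiff : ∀ l p q, ∀ v : H, ‖hfil l p q v - gfil l p q v‖ ≤ Δ * ‖v‖)
    (hlayerx : ∀ l, 1 ≤ l → l ≤ L → ∀ p, p < F l →
      x l p = σ (∑ q ∈ Finset.range (F (l - 1)), hfil l p q (x (l - 1) q)))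
    (hlayery : ∀ l, 1 ≤ l → l ≤ L → ∀ p, p < F l →
      y l p = σ (∑ q ∈ Finset.range (F (l - 1)), gfil l p q (y (l - 1) q)))
    (hinput : ∀ q, q < F 0 → x 0 q = y 0 q)
    (hin_norm : ‖x 0 0‖ ≤ 1) :
    ‖x L 0 - y L 0‖ ≤ (L : ℝ) * (Fm : ℝ) ^ (L - 1) * Δ := by
  have key : ∀ l, l ≤ L → ∀ p, p < F l →
      ‖y l p‖ ≤ (Fm:ℝ)^(l-1) ∧ ‖x l p - y l p‖ ≤ (l:ℝ) * (Fm:ℝ)^(l-1) * Δ := by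
    intro l
    induction l with
    | zero =>
      intro _ p hp
      rw [hF0] at hp
      interval_cases p
      have he := hinput 0 (by rw [hF0]; exact Nat.one_pos)
      constructor
      · rw [← he]; simpa using hin_norm
      · rw [he]; simp
    | succ l ih =>
      intro hlL p hp
      have hl1 : l ≤ L := Nat.le_of_succ_le hlL
      have hx := hlayerx (l+1) (by omega) hlL p hp
      have hy := hlayery (l+1) (by omega) hlL p hp
      simp only [Nat.add_sub_cancel] at hx hy
      have hCnn : (0:ℝ) ≤ (Fm:ℝ)^(l-1) := by positivity
      have hFle : (F l : ℝ) * (Fm:ℝ)^(l-1) ≤ (Fm:ℝ)^l := by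
        rcases Nat.eq_zero_or_pos l with h0 | h1
        · subst h0; simp [hF0]
        · rw [hFmid l h1 (by omega)]
          conv_rhs => rw [show l = (l-1)+1 from by omega, pow_succ']
      -- bound on ‖y (l+1) p‖
      have hysum : ∀ q ∈ Finset.range (F l), ‖gfil (l+1) p q (y l q)‖ ≤ (Fm:ℝ)^(l-1) := by
        intro q hq
        have h1 : ‖gfil (l+1) p q (y l q)‖ ≤ ‖gfil (l+1) p q‖ * ‖y l q‖ :=
          ContinuousLinearMap.le_opNorm _ _
        have h2 := (ih hl1 q (Finset.mem_range.mp hq)).1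
        nlinarith [hnormg (l+1) p q, norm_nonneg (y l q), norm_nonneg (gfil (l+1) p q)]
      have hyb : ‖y (l+1) p‖ ≤ (Fm:ℝ)^((l+1)-1) := by
        rw [hy]
        calc ‖σ (∑ q ∈ Finset.range (F l), gfil (l+1) p q (y l q))‖
            = ‖σ (∑ q ∈ Finset.range (F l), gfil (l+1) p q (y l q)) - σ 0‖ := by
              rw [hσ0, sub_zero]
          _ ≤ ‖(∑ q ∈ Finset.range (F l), gfil (l+1) p q (y l q)) - 0‖ := hσ _ _
          _ = ‖∑ q ∈ Finset.range (F l), gfil (l+1) p q (y l q)‖ := by rw [sub_zero]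
          _ ≤ ∑ q ∈ Finset.range (F l), ‖gfil (l+1) p q (y l q)‖ := norm_sum_le _ _
          _ ≤ ∑ q ∈ Finset.range (F l), (Fm:ℝ)^(l-1) := Finset.sum_le_sum hysum
          _ = (F l : ℝ) * (Fm:ℝ)^(l-1) := by
              rw [Finset.sum_const, Finset.card_range, nsmul_eq_mul]
          _ ≤ (Fm:ℝ)^((l+1)-1) := by simpa using hFle
      refine ⟨hyb, ?_⟩
      have hterm : ∀ q ∈ Finset.range (F l),
          ‖hfil (l+1) p q (x l q) - gfil (l+1) p q (y l q)‖
            ≤ ((l:ℝ)+1) * (Fm:ℝ)^(l-1) * Δ := by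
        intro q hq
        have hq' := Finset.mem_range.mp hq
        obtain ⟨ihy, ihd⟩ := ih hl1 q hq'
        have t1 : ‖hfil (l+1) p q (x l q) - hfil (l+1) p q (y l q)‖ ≤ ‖x l q - y l q‖ := by
          rw [← ContinuousLinearMap.map_sub]
          have := ContinuousLinearMap.le_opNorm (hfil (l+1) p q) (x l q - y l q)
          nlinarith [hnormh (l+1) p q, norm_nonneg (x l q - y l q)]
        have t2 := hdiff (l+1) p q (y l q)
        calc ‖hfil (l+1) p q (x l q) - gfil (l+1) p q (y l q)‖
            ≤ ‖hfil (l+1) p q (x l q) - hfil (l+1) p q (y l q)‖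
              + ‖hfil (l+1) p q (y l q) - gfil (l+1) p q (y l q)‖ := by
              have := norm_sub_le_norm_sub_add_norm_sub (hfil (l+1) p q (x l q))
                (hfil (l+1) p q (y l q)) (gfil (l+1) p q (y l q))
              linarith
          _ ≤ ‖x l q - y l q‖ + Δ * ‖y l q‖ := by linarith
          _ ≤ (l:ℝ) * (Fm:ℝ)^(l-1) * Δ + Δ * (Fm:ℝ)^(l-1) := by
              have := norm_nonneg (y l q)
              nlinarith
          _ = ((l:ℝ)+1) * (Fm:ℝ)^(l-1) * Δ := by ring
      calc ‖x (l+1) p - y (l+1) p‖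
          = ‖σ (∑ q ∈ Finset.range (F l), hfil (l+1) p q (x l q))
            - σ (∑ q ∈ Finset.range (F l), gfil (l+1) p q (y l q))‖ := by rw [hx, hy]
        _ ≤ ‖(∑ q ∈ Finset.range (F l), hfil (l+1) p q (x l q))
            - ∑ q ∈ Finset.range (F l), gfil (l+1) p q (y l q)‖ := hσ _ _
        _ = ‖∑ q ∈ Finset.range (F l),
            (hfil (l+1) p q (x l q) - gfil (l+1) p q (y l q))‖ := by
            rw [Finset.sum_sub_distrib]
        _ ≤ ∑ q ∈ Finset.range (F l),
            ‖hfil (l+1) p q (x l q) - gfil (l+1) p q (y l q)‖ := norm_sum_le _ _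
        _ ≤ ∑ q ∈ Finset.range (F l), ((l:ℝ)+1) * (Fm:ℝ)^(l-1) * Δ :=
            Finset.sum_le_sum hterm
        _ = (F l : ℝ) * (((l:ℝ)+1) * (Fm:ℝ)^(l-1) * Δ) := by
            rw [Finset.sum_const, Finset.card_range, nsmul_eq_mul]
        _ ≤ ((l+1 : ℕ):ℝ) * (Fm:ℝ)^((l+1)-1) * Δ := by
            have hFn : (0:ℝ) ≤ (F l : ℝ) := Nat.cast_nonneg _
            push_cast
            have hmul := mul_le_mul_of_nonneg_left hFle
              (by positivity : (0:ℝ) ≤ ((l:ℝ)+1) * Δ)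
            nlinarith [hmul]
  exact (key L le_rfl 0 (by rw [hFL]; exact Nat.one_pos)).2
end
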